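/- For every x > 0 and every finite sequence of real numbers γ₁, ..., γ_N, one has ∫_{−∞}^{∞} | ∑_{j=1}^N x^{iγ_j}/(1 + (t − γ_j)²) |² dt = (π/2) ∑_{j=1}^N ∑_{k=1}^N x^{i(γ_j − γ_k)} · 4/(4 + (γ_j − γ_k)²). -/

import Mathlib

/-!
Expanding the square, the integral becomes `∑ⱼ ∑ₖ x^{iγⱼ} x^{-iγₖ} ∫ dt / ((1+(t-γⱼ)²)(1+(t-γₖ)²))`.
The overlap integral of two unit Lorentzians centred at `a` and `b` is `2π / (4 + (a-b)²)`
(the convolution of two Cauchy densities of width 1 is the Cauchy density of width 2).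
For `a ≠ b` it follows from an explicit antiderivative obtained by partial fractions, and the
case `a = b` follows by continuity in `a` (dominated convergence).
-/

open Complex Filter MeasureTheory Real Set Topology ComplexConjugate

lemma inv_one_add_sub_sq_mul_le (a b t : ℝ) :
    ((1 + (t - a) ^ 2) * (1 + (t - b) ^ 2))⁻¹ ≤ (1 + (t - b) ^ 2)⁻¹ := by
  rw [mul_inv]
  exact mul_le_of_le_one_left (by positivity) (inv_le_one_of_one_le₀ (by nlinarith))

lemma integrable_inv_one_add_sub_sq_mul (a b : ℝ) :
    Integrable fun t : ℝ => ((1 + (t - a) ^ 2) * (1 + (t - b) ^ 2))⁻¹ := by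
  refine (integrable_inv_one_add_sq.comp_sub_right b).mono (by fun_prop)
    (ae_of_all _ fun t => ?_)
  rw [norm_of_nonneg (by positivity), norm_of_nonneg (by positivity)]
  exact inv_one_add_sub_sq_mul_le a b t

lemma tendsto_one_add_sub_sq_div_one_add_sub_sq (a b : ℝ) :
    Tendsto (fun s : ℝ => (1 + (s - b) ^ 2) / (1 + (s - a) ^ 2)) (cocompact ℝ) (𝓝 1) := by
  have h0 : Tendsto (fun s : ℝ => s⁻¹) (cocompact ℝ) (𝓝 0) := by
    rw [← Metric.cobounded_eq_cocompact]; exact tendsto_inv₀_cobounded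
  have h := ((h0.pow 2).add (((h0.const_mul b).const_sub 1).pow 2)).div
    ((h0.pow 2).add (((h0.const_mul a).const_sub 1).pow 2)) (by norm_num)
  rw [show ((0 : ℝ) ^ 2 + (1 - b * 0) ^ 2) / (0 ^ 2 + (1 - a * 0) ^ 2) = 1 by norm_num] at h
  have hne : ∀ᶠ s : ℝ in cocompact ℝ, s ≠ 0 := by
    rw [← Metric.cobounded_eq_cocompact]; exact Bornology.eventually_ne_cobounded 0
  refine h.congr' ?_
  filter_upwards [hne] with s hs
  simp only [Pi.div_apply]
  field_simp

lemma tendsto_log_one_add_sub_sq_sub_log_one_add_sub_sq (a b : ℝ) :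
    Tendsto (fun s : ℝ => Real.log (1 + (s - b) ^ 2) - Real.log (1 + (s - a) ^ 2))
      (cocompact ℝ) (𝓝 0) := by
  have h := (continuousAt_log one_ne_zero).tendsto.comp
    (tendsto_one_add_sub_sq_div_one_add_sub_sq a b)
  rw [Real.log_one] at h
  exact h.congr fun s => Real.log_div (by positivity) (by positivity)

lemma tendsto_arctan_sub_atTop (c : ℝ) :
    Tendsto (fun s : ℝ => Real.arctan (s - c)) atTop (𝓝 (π / 2)) :=
  (tendsto_arctan_atTop.mono_right nhdsWithin_le_nhds).comp
    (tendsto_atTop_add_const_right _ _ tendsto_id)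

lemma tendsto_arctan_sub_atBot (c : ℝ) :
    Tendsto (fun s : ℝ => Real.arctan (s - c)) atBot (𝓝 (-(π / 2))) :=
  (tendsto_arctan_atBot.mono_right nhdsWithin_le_nhds).comp
    (tendsto_atBot_add_const_right _ _ tendsto_id)

lemma hasDerivAt_log_one_add_sub_sq (c s : ℝ) :
    HasDerivAt (fun s : ℝ => Real.log (1 + (s - c) ^ 2)) (2 * (s - c) / (1 + (s - c) ^ 2)) s := by
  have h : HasDerivAt (fun s : ℝ => 1 + (s - c) ^ 2) (2 * (s - c)) s := by
    simpa using (((hasDerivAt_id s).sub_const c).pow 2).const_add 1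
  exact h.log (by positivity)

lemma hasDerivAt_arctan_sub (c s : ℝ) :
    HasDerivAt (fun s : ℝ => Real.arctan (s - c)) (1 / (1 + (s - c) ^ 2)) s := by
  simpa using ((hasDerivAt_id s).sub_const c).arctan

lemma integral_inv_one_add_sub_sq_mul_of_ne {a b : ℝ} (hab : a ≠ b) :
    ∫ t : ℝ, ((1 + (t - a) ^ 2) * (1 + (t - b) ^ 2))⁻¹ = 2 * π / (4 + (a - b) ^ 2) := by
  set β : ℝ := (4 + (a - b) ^ 2)⁻¹
  set F : ℝ → ℝ := fun t => β * (Real.arctan (t - a) + Real.arctan (t - b)) +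
    β / (a - b) * (Real.log (1 + (t - b) ^ 2) - Real.log (1 + (t - a) ^ 2))
  have hderiv (t : ℝ) : HasDerivAt F ((1 + (t - a) ^ 2) * (1 + (t - b) ^ 2))⁻¹ t := by
    refine (((hasDerivAt_arctan_sub a t).add (hasDerivAt_arctan_sub b t)).const_mul β |>.add
      (((hasDerivAt_log_one_add_sub_sq b t).sub
        (hasDerivAt_log_one_add_sub_sq a t)).const_mul (β / (a - b)))).congr_deriv ?_
    have : a - b ≠ 0 := sub_ne_zero.mpr hab
    simp only [β]
    field_simp
    ring
  have hlog := tendsto_log_one_add_sub_sq_sub_log_one_add_sub_sq a b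
  have htop : Tendsto F atTop (𝓝 (β * π)) := by
    convert (((tendsto_arctan_sub_atTop a).add (tendsto_arctan_sub_atTop b)).const_mul β).add
      ((hlog.mono_left atTop_le_cocompact).const_mul (β / (a - b))) using 2
    ring
  have hbot : Tendsto F atBot (𝓝 (-(β * π))) := by
    convert (((tendsto_arctan_sub_atBot a).add (tendsto_arctan_sub_atBot b)).const_mul β).add
      ((hlog.mono_left atBot_le_cocompact).const_mul (β / (a - b))) using 2
    ring
  rw [integral_of_hasDerivAt_of_tendsto hderiv (integrable_inv_one_add_sub_sq_mul a b) hbot htop]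
  ring

lemma continuous_integral_inv_one_add_sub_sq_mul (b : ℝ) :
    Continuous fun a : ℝ => ∫ t : ℝ, ((1 + (t - a) ^ 2) * (1 + (t - b) ^ 2))⁻¹ := by
  refine continuous_of_dominated (bound := fun t => (1 + (t - b) ^ 2)⁻¹)
    (fun a => (integrable_inv_one_add_sub_sq_mul a b).aestronglyMeasurable)
    (fun a => ae_of_all _ fun t => ?_) (integrable_inv_one_add_sq.comp_sub_right b)
    (ae_of_all _ fun t => ?_)
  · rw [norm_of_nonneg (by positivity)]
    exact inv_one_add_sub_sq_mul_le a b t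
  · exact Continuous.inv₀ (by fun_prop) fun a => by positivity

theorem integral_inv_one_add_sub_sq_mul (a b : ℝ) :
    ∫ t : ℝ, ((1 + (t - a) ^ 2) * (1 + (t - b) ^ 2))⁻¹ = 2 * π / (4 + (a - b) ^ 2) := by
  have hrhs : Continuous fun a : ℝ => 2 * π / (4 + (a - b) ^ 2) :=
    continuous_const.div (by fun_prop) fun a => by positivity
  refine congrFun ((continuous_integral_inv_one_add_sub_sq_mul b).ext_on
    (dense_compl_singleton b) hrhs fun a ha => ?_) a
  exact integral_inv_one_add_sub_sq_mul_of_ne ha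

lemma integral_norm_sum_sq {α ι : Type*} [MeasurableSpace α] {μ : Measure α} [Fintype ι]
    (f : ι → α → ℂ) (hf : ∀ j k, Integrable (fun t => f j t * conj (f k t)) μ) :
    ((∫ t, ‖∑ j, f j t‖ ^ 2 ∂μ : ℝ) : ℂ) = ∑ j, ∑ k, ∫ t, f j t * conj (f k t) ∂μ := by
  have hpt (t : α) : ((‖∑ j, f j t‖ ^ 2 : ℝ) : ℂ) = ∑ j, ∑ k, f j t * conj (f k t) := by
    rw [← Complex.normSq_eq_norm_sq, ← Complex.mul_conj, map_sum, Finset.sum_mul_sum]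
  rw [← integral_complex_ofReal, integral_congr_ae (ae_of_all _ hpt),
    integral_finsetSum _ fun j _ => integrable_finsetSum _ fun k _ => hf j k]
  exact Finset.sum_congr rfl fun j _ => integral_finsetSum _ fun k _ => hf j k

theorem integral_norm_sum_div_one_add_sub_sq_sq {ι : Type*} [Fintype ι] (c : ι → ℂ)
    (γ : ι → ℝ) :
    ((∫ t : ℝ, ‖∑ j, c j / ((1 + (t - γ j) ^ 2 : ℝ) : ℂ)‖ ^ 2 : ℝ) : ℂ) =
      ∑ j, ∑ k, c j * conj (c k) * ((2 * π / (4 + (γ j - γ k) ^ 2) : ℝ) : ℂ) := by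
  have hprod (j k : ι) (t : ℝ) :
      c j / ((1 + (t - γ j) ^ 2 : ℝ) : ℂ) * conj (c k / ((1 + (t - γ k) ^ 2 : ℝ) : ℂ)) =
        c j * conj (c k) * (((1 + (t - γ j) ^ 2) * (1 + (t - γ k) ^ 2))⁻¹ : ℝ) := by
    rw [map_div₀, Complex.conj_ofReal, div_mul_div_comm, div_eq_mul_inv]
    push_cast
    ring
  have hint (j k : ι) : Integrable fun t : ℝ =>
      c j / ((1 + (t - γ j) ^ 2 : ℝ) : ℂ) * conj (c k / ((1 + (t - γ k) ^ 2 : ℝ) : ℂ)) := by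
    simp only [hprod]
    exact (integrable_inv_one_add_sub_sq_mul (γ j) (γ k)).ofReal.const_mul _
  rw [integral_norm_sum_sq _ hint]
  simp_rw [hprod, integral_const_mul, integral_complex_ofReal, integral_inv_one_add_sub_sq_mul]

lemma exp_mul_conj_exp (a b L : ℝ) :
    Complex.exp (I * a * L) * conj (Complex.exp (I * b * L)) =
      Complex.exp (I * ((a - b : ℝ) : ℂ) * L) := by
  rw [← Complex.exp_conj, ← Complex.exp_add]
  simp only [map_mul, Complex.conj_I, Complex.conj_ofReal]
  push_cast
  ring_nf

theorem pair_correlation_integral_identity_general (x : ℝ) (N : ℕ) (γ : Fin N → ℝ) :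
    ((∫ t : ℝ, ‖∑ j : Fin N,
        Complex.exp (Complex.I * (γ j : ℂ) * (Real.log x : ℂ)) /
          (((1 + (t - γ j) ^ 2 : ℝ)) : ℂ)‖ ^ 2 : ℝ) : ℂ)
      = (π / 2 : ℝ) * ∑ j : Fin N, ∑ k : Fin N,
          Complex.exp (Complex.I * ((γ j - γ k : ℝ) : ℂ) * (Real.log x : ℂ)) *
            ((4 / (4 + (γ j - γ k) ^ 2) : ℝ) : ℂ) := by
  rw [integral_norm_sum_div_one_add_sub_sq_sq, Finset.mul_sum]
  refine Finset.sum_congr rfl fun j _ => ?_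
  rw [Finset.mul_sum]
  refine Finset.sum_congr rfl fun k _ => ?_
  rw [exp_mul_conj_exp, mul_left_comm, ← Complex.ofReal_mul]
  congr 3
  ring

/-- For any `x > 0` and any finite sequence of reals `γ₁, …, γ_N`,
`∫_ℝ |∑_j x^{iγ_j}/(1+(t-γ_j)²)|² dt = (π/2) ∑_{j,k} x^{i(γ_j-γ_k)} · 4/(4+(γ_j-γ_k)²)`,
where `x^{iγ} = e^{iγ log x}`. -/
theorem pair_correlation_integral_identity (x : ℝ) (hx : 0 < x) (N : ℕ) (γ : Fin N → ℝ) :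
    ((∫ t : ℝ, ‖∑ j : Fin N,
        Complex.exp (Complex.I * (γ j : ℂ) * (Real.log x : ℂ)) /
          (((1 + (t - γ j) ^ 2 : ℝ)) : ℂ)‖ ^ 2 : ℝ) : ℂ)
      = (π / 2 : ℝ) * ∑ j : Fin N, ∑ k : Fin N,
          Complex.exp (Complex.I * ((γ j - γ k : ℝ) : ℂ) * (Real.log x : ℂ)) *
            ((4 / (4 + (γ j - γ k) ^ 2) : ℝ) : ℂ) :=
  pair_correlation_integral_identity_general x N γ
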